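/- Let p be an odd prime and n ≥ 1. Let φ ∈ BSymb_{Γ₁(p)}(𝒱₀(Z/pZ)) be a weight-0 boundary modular symbol of level Γ₁(p) with values in Z/pZ, and set C = Σ_{a ∈ (Z/pZ)^×} (φ({∞})(1) − φ({a/p})(1)) ∈ Z/pZ. Then, writing T = γ_n − 1 for a generator γ_n of 𝒢_n, the level-n Mazur–Tate element satisfies θ_{n,φ} ≡ C · T^{p^n − 1} (mod p). -/

import Mathlib

noncomputable section

open scoped Classical

/-- The projective line over `ℚ`, realized as the projectivization of `ℚ²`. -/
abbrev P1 : Type := Projectivization ℚ (Fin 2 → ℚ)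

/-- The point of `P¹(ℚ)` corresponding to a rational number `x` (the class of `(x, 1)`). -/
def ratPt (x : ℚ) : P1 :=
  Projectivization.mk ℚ ![x, 1] (fun h => by simpa using congrFun h 1)

/-- The point `∞ ∈ P¹(ℚ)` (the class of `(1, 0)`). -/
def inftyPt : P1 :=
  Projectivization.mk ℚ ![1, 0] (fun h => by simpa using congrFun h 0)

lemma mulVecLin_injective {g : Matrix (Fin 2) (Fin 2) ℚ} (hg : g.det ≠ 0) :
    Function.Injective g.mulVecLin := by
  intro x y hxy
  have h1 := congrArg g⁻¹.mulVec hxy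
  simp only [Matrix.mulVecLin_apply, Matrix.mulVec_mulVec,
    Matrix.nonsing_inv_mul g (isUnit_iff_ne_zero.2 hg), Matrix.one_mulVec] at h1
  exact h1

/-- The action of an integer matrix with nonzero determinant on `P¹(ℚ)` by linear fractional
transformations (acting on column vectors); singular matrices act as the identity (junk). -/
def actP1 (g : Matrix (Fin 2) (Fin 2) ℤ) : P1 → P1 :=
  if hg : (g.map ((↑) : ℤ → ℚ)).det ≠ 0 then
    Projectivization.map (g.map ((↑) : ℤ → ℚ)).mulVecLin (mulVecLin_injective hg)
  else id

/-- The group `Δ` of divisors on `P¹(ℚ)`. -/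
abbrev Dvs : Type := P1 →₀ ℤ

/-- The degree map on divisors. -/
def deg : Dvs →+ ℤ := Finsupp.liftAddHom fun _ => AddMonoidHom.id ℤ

/-- The group `Δ⁰` of degree-zero divisors on `P¹(ℚ)`. -/
abbrev Dvs0 : Type := deg.ker

/-- The action of an integer matrix on divisors. -/
def divAct (g : Matrix (Fin 2) (Fin 2) ℤ) : Dvs →+ Dvs :=
  Finsupp.mapDomain.addMonoidHom (actP1 g)

lemma deg_divAct (g : Matrix (Fin 2) (Fin 2) ℤ) (D : Dvs) :
    deg (divAct g D) = deg D := by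
  have h : deg.comp (divAct g) = deg := by
    apply Finsupp.addHom_ext
    intro x m
    simp [divAct, deg, Finsupp.mapDomain.addMonoidHom_apply, Finsupp.mapDomain_single,
      Finsupp.liftAddHom_apply, Finsupp.sum_single_index]
  exact DFunLike.congr_fun h D

/-- The action of an integer matrix on degree-zero divisors. -/
def div0Act (g : Matrix (Fin 2) (Fin 2) ℤ) : Dvs0 →+ Dvs0 :=
  AddMonoidHom.mk' (fun D => ⟨divAct g D.1, by
      have hD := D.2
      rw [AddMonoidHom.mem_ker] at hD ⊢
      rw [deg_divAct]; exact hD⟩)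
    (fun D E => by
      apply Subtype.ext
      simp [map_add])

/-- The degree-zero divisor `{x} - {y}`. -/
def dvsr (x y : P1) : Dvs0 :=
  ⟨Finsupp.single x 1 - Finsupp.single y 1, by
    rw [AddMonoidHom.mem_ker, map_sub]
    simp [deg, Finsupp.liftAddHom_apply, Finsupp.sum_single_index]⟩

/-- The right action `P ↦ P|γ` of a `2 × 2` matrix `γ = (a b; c d)` on two-variable polynomials,
given by `(P|γ)(X, Y) = P (dX - cY, -bX + aY)`.  On the homogeneous polynomials of degree `k`
this is the right action on `V_k(R)`. -/
def polyAct {R : Type} [CommRing R] (g : Matrix (Fin 2) (Fin 2) R)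
    (P : MvPolynomial (Fin 2) R) : MvPolynomial (Fin 2) R :=
  MvPolynomial.aeval
    ![MvPolynomial.C (g 1 1) * MvPolynomial.X 0 - MvPolynomial.C (g 1 0) * MvPolynomial.X 1,
      MvPolynomial.C (g 0 0) * MvPolynomial.X 1 - MvPolynomial.C (g 0 1) * MvPolynomial.X 0] P

/-- Evaluation of a two-variable polynomial at `(X, Y) = (0, 1)`. -/
def evalXY {R : Type} [CommRing R] (P : MvPolynomial (Fin 2) R) : R :=
  MvPolynomial.eval ![0, 1] P

/-- `x` and `z` lie in the same `Γ₁(N)`-orbit (cusp) of `P¹(ℚ)`. -/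
def inOrb (N : ℕ) (x z : P1) : Prop :=
  ∃ γ ∈ CongruenceSubgroup.Gamma1 N, actP1 γ.1 x = z

/-- The Ramanujan tau function: the coefficients of `q ∏ (1 - qⁿ)²⁴`. -/
def ramanujanTau (n : ℕ) : ℤ :=
  (Polynomial.X * ∏ m ∈ Finset.Icc 1 n, (1 - Polynomial.X ^ m) ^ 24 : Polynomial ℤ).coeff n

/-- A coset representative `(1 j; 0 ℓ)` for the Hecke operator `T_ℓ`. -/
def heckeMat (ℓ j : ℕ) : Matrix (Fin 2) (Fin 2) ℤ := !![1, (j : ℤ); 0, (ℓ : ℤ)]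

/-- The coset representative `(ℓ 0; 0 1)` for the Hecke operator `T_ℓ`. -/
def heckeMatInf (ℓ : ℕ) : Matrix (Fin 2) (Fin 2) ℤ := !![(ℓ : ℤ), 0; 0, 1]

/-- The Hecke operator `T_ℓ` on (level one) modular symbols `Δ⁰ → V_k(R)`. -/
def heckeT {R : Type} [CommRing R] (ℓ : ℕ) (φ : Dvs0 →+ MvPolynomial (Fin 2) R)
    (D : Dvs0) : MvPolynomial (Fin 2) R :=
  (∑ j ∈ Finset.range ℓ,
      polyAct ((heckeMat ℓ j).map (Int.cast : ℤ → R)) (φ (div0Act (heckeMat ℓ j) D)))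
    + polyAct ((heckeMatInf ℓ).map (Int.cast : ℤ → R)) (φ (div0Act (heckeMatInf ℓ) D))

instance neZero_pow_succ (p n : ℕ) [hp : Fact p.Prime] : NeZero (p ^ (n + 1)) :=
  ⟨pow_ne_zero _ hp.out.ne_zero⟩

instance neZero_of_prime (p : ℕ) [hp : Fact p.Prime] : NeZero p := ⟨hp.out.ne_zero⟩

/-- The level-`n` Mazur–Tate element attached to the coefficient data
`c : (ℤ/p^{n+1})^× → R` via the projection `π : (ℤ/p^{n+1})^× ↠ 𝒢ₙ`:
`θ = ∑_a c(a) • σ_{π(a)}` in the group ring `R[𝒢ₙ]`. -/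
def MTel {R : Type} [CommRing R] {G : Type} [CommGroup G] (p n : ℕ)
    [NeZero (p ^ (n + 1))] (π : (ZMod (p ^ (n + 1)))ˣ →* G)
    (c : (ZMod (p ^ (n + 1)))ˣ → R) : MonoidAlgebra R G :=
  ∑ a : (ZMod (p ^ (n + 1)))ˣ, c a • (MonoidAlgebra.of R G (π a))

/-- `F ∈ ℤ_p[𝒢]` has Iwasawa invariants `μ(F) = m` and `λ(F) = l`, computed with respect to the
generator `γ` of `𝒢` (a cyclic group of order `N`), by writing `F = ∑_{i<N} aᵢ Tⁱ` with
`T = γ - 1`: `m` is the minimal `p`-adic valuation of the `aᵢ` and `l` is the first index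
where it is attained. -/
def hasMuLambda (p : ℕ) [Fact p.Prime] {G : Type} [CommGroup G] (N : ℕ) (γ : G)
    (F : MonoidAlgebra ℤ_[p] G) (m l : ℕ) : Prop :=
  ∃ a : ℕ → ℤ_[p],
    F = ∑ i ∈ Finset.range N, a i • (MonoidAlgebra.of ℤ_[p] G γ - 1) ^ i ∧
    (∀ i < N, (p : ℤ_[p]) ^ m ∣ a i) ∧
    (∀ i < l, (p : ℤ_[p]) ^ (m + 1) ∣ a i) ∧
    ¬ (p : ℤ_[p]) ^ (m + 1) ∣ a l

end
noncomputable section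
open scoped Classical

/-- The reduction-mod-`p` of the weight-0 Eisenstein boundary symbol
`φ_{0, ω_p^a, 𝟙} = ∑_{x mod p} (ω_p^a)⁻¹(x) φ_{0,x,p}` (evaluated at the polynomial `1`),
viewed as the function on `P¹(ℚ)` which, at `z`, sums `ω(x)^{p-1-a}` over those
`x ∈ {1, …, p-1}` whose cusp `x/p` contains `z`. -/
def phiE (p : ℕ) [Fact p.Prime] (ω : ℤ → ℤ_[p]) (a : ℕ) (z : P1) : ℤ_[p] :=
  ∑ x ∈ Finset.Ico 1 p,
    if inOrb p (ratPt ((x : ℚ) / (p : ℚ))) z then ω (x : ℤ) ^ (p - 1 - a) else 0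

/-- The boundary symbol `φ₉ ∈ Hom_{Γ₁(27)}(Δ, ℤ/9ℤ)`, constant on `Γ₁(27)`-cusps, with the
explicit values from the paper. -/
def phi9 (z : P1) : ZMod 9 :=
  if inOrb 27 (ratPt (1/9)) z ∨ inOrb 27 (ratPt (8/27)) z ∨ inOrb 27 (ratPt (10/27)) z ∨
     inOrb 27 (ratPt (8/9)) z ∨ inOrb 27 inftyPt z then 0
  else if inOrb 27 (ratPt 0) z ∨ inOrb 27 (ratPt (1/12)) z ∨ inOrb 27 (ratPt (1/10)) z ∨
     inOrb 27 (ratPt (1/8)) z ∨ inOrb 27 (ratPt (5/12)) z then 1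
  else if inOrb 27 (ratPt (2/27)) z ∨ inOrb 27 (ratPt (2/9)) z ∨ inOrb 27 (ratPt (7/27)) z ∨
     inOrb 27 (ratPt (11/27)) z ∨ inOrb 27 (ratPt (7/9)) z then 3
  else if inOrb 27 (ratPt (1/11)) z ∨ inOrb 27 (ratPt (1/7)) z ∨ inOrb 27 (ratPt (1/3)) z ∨
     inOrb 27 (ratPt (1/2)) z ∨ inOrb 27 (ratPt (2/3)) z then 4
  else if inOrb 27 (ratPt (4/27)) z ∨ inOrb 27 (ratPt (5/27)) z ∨ inOrb 27 (ratPt (4/9)) z ∨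
     inOrb 27 (ratPt (13/27)) z ∨ inOrb 27 (ratPt (5/9)) z then 6
  else if inOrb 27 (ratPt (1/13)) z ∨ inOrb 27 (ratPt (1/6)) z ∨ inOrb 27 (ratPt (1/5)) z ∨
     inOrb 27 (ratPt (1/4)) z ∨ inOrb 27 (ratPt (5/6)) z then 7
  else 0

end

/-!
Since `φ` is `Γ₁(p)`-invariant, the coefficient `φ(∞) - φ(a/p^{n+1})` of `σ_a` only depends on
`a mod p`: the cusp `a/p^{n+1}` is `Γ₁(p)`-equivalent to `a'/p` for some `a' ≡ a (mod p)`, and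
`a'/p` to `a/p` by an integral translation. As `|𝒢ₙ| = pⁿ` is prime to `|(ℤ/pℤ)ˣ| = p - 1`,
`a ↦ (a mod p, πₙ(a))` identifies `(ℤ/p^{n+1}ℤ)ˣ` with `(ℤ/pℤ)ˣ × 𝒢ₙ`, so the Mazur–Tate
element is `C` times the norm element `∑_{g ∈ 𝒢ₙ} g = ∑_{i < pⁿ} γₙⁱ`. Finally
`(x - 1) ∑_{i < pⁿ} xⁱ = x^{pⁿ} - 1 = (x - 1)^{pⁿ}` in characteristic `p`, so this norm element
is `T^{pⁿ - 1}`.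
-/

theorem geom_sum_eq_sub_one_pow_char_pow {R : Type*} [Ring R] (p : ℕ) [Fact p.Prime]
    [Algebra (ZMod p) R] (n : ℕ) (x : R) :
    ∑ i ∈ Finset.range (p ^ n), x ^ i = (x - 1) ^ (p ^ n - 1) := by
  suffices hX : ∑ i ∈ Finset.range (p ^ n), (Polynomial.X : Polynomial (ZMod p)) ^ i =
      (Polynomial.X - 1) ^ (p ^ n - 1) by
    simpa using congrArg (Polynomial.aeval x) hX
  have hpos : 1 ≤ p ^ n := Nat.one_le_pow _ _ (Fact.out : p.Prime).pos
  refine (Polynomial.monic_X_sub_C (1 : ZMod p)).isRegular.right ?_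
  simp only [map_one]
  rw [geom_sum_mul, ← pow_succ, Nat.sub_add_cancel hpos, sub_pow_char_pow, one_pow]

theorem sum_eq_sum_range_orderOf_pow {G M : Type*} [Group G] [Fintype G] [AddCommMonoid M]
    {γ : G} (hγ : orderOf γ = Fintype.card G) (f : G → M) :
    ∑ g, f g = ∑ i ∈ Finset.range (orderOf γ), f (γ ^ i) := by
  classical
  have hgen : ∀ g : G, g ∈ Subgroup.zpowers γ := by
    rw [((Subgroup.zpowers γ).card_eq_iff_eq_top).mp
      (by rw [Nat.card_zpowers, hγ, Nat.card_eq_fintype_card])]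
    exact Subgroup.mem_top
  rw [← IsCyclic.image_range_orderOf hgen, Finset.sum_image]
  intro i hi j hj hij
  exact pow_injOn_Iio_orderOf (by simpa using hi) (by simpa using hj) hij

theorem MonoidAlgebra.sum_of_eq_sub_one_pow {k G : Type*} [Ring k] (p : ℕ) [Fact p.Prime]
    [Algebra (ZMod p) k] [Group G] [Fintype G] {n : ℕ} (hG : Fintype.card G = p ^ n) {γ : G}
    (hγ : orderOf γ = p ^ n) :
    ∑ g : G, MonoidAlgebra.of k G g = (MonoidAlgebra.of k G γ - 1) ^ (p ^ n - 1) := by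
  rw [sum_eq_sum_range_orderOf_pow (hγ.trans hG.symm), hγ]
  simp only [map_pow]
  exact geom_sum_eq_sub_one_pow_char_pow p n _

theorem Fintype.sum_smul_comp_of_bijective {ι κ G k M : Type*} [Fintype ι] [Fintype κ]
    [Fintype G] [Semiring k] [AddCommMonoid M] [Module k M] {f : ι → κ} {π : ι → G}
    (h : Function.Bijective fun i => (f i, π i)) (c : κ → k) (d : G → M) :
    ∑ i, c (f i) • d (π i) = (∑ j, c j) • ∑ g, d g := by
  rw [Fintype.sum_bijective _ h _ (fun x => c x.1 • d x.2) (fun _ => rfl), Fintype.sum_prod_type,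
    Finset.sum_smul]
  simp_rw [Finset.smul_sum]

theorem MonoidHom.card_ker_mul_card_of_surjective {A B : Type*} [Group A] [Group B]
    {f : A →* B} (hf : Function.Surjective f) : Nat.card f.ker * Nat.card B = Nat.card A := by
  rw [← f.ker.card_mul_index, Subgroup.index_ker, MonoidHom.range_eq_top.mpr hf,
    Subgroup.card_top]

theorem MonoidHom.prod_bijective_of_coprime {A B C : Type*} [Group A] [Group B] [Group C]
    [Finite A] {f : A →* B} {g : A →* C} (hf : Function.Surjective f)
    (hg : Function.Surjective g) (hcard : Nat.card A = Nat.card B * Nat.card C)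
    (hcop : (Nat.card B).Coprime (Nat.card C)) : Function.Bijective (f.prod g) := by
  have : Finite B := Finite.of_surjective f hf
  have : Finite C := Finite.of_surjective g hg
  have hkf : Nat.card f.ker = Nat.card C := by
    have := card_ker_mul_card_of_surjective hf
    rw [hcard, mul_comm (Nat.card B)] at this
    exact Nat.eq_of_mul_eq_mul_right Nat.card_pos this
  have hkg : Nat.card g.ker = Nat.card B := by
    have := card_ker_mul_card_of_surjective hg
    rw [hcard] at this
    exact Nat.eq_of_mul_eq_mul_right Nat.card_pos this
  refine (injective_iff_map_eq_one _).mpr (fun x hx => ?_) |>.bijective_of_nat_card_le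
    (by rw [Nat.card_prod, hcard])
  rw [MonoidHom.prod_apply, Prod.mk_eq_one] at hx
  refine orderOf_eq_one_iff.mp (Nat.eq_one_of_dvd_coprimes hcop ?_ ?_)
  · exact hkg ▸ Subgroup.orderOf_dvd_natCard _ hx.2
  · exact hkf ▸ Subgroup.orderOf_dvd_natCard _ hx.1

theorem ZMod.unitsMap_prod_bijective {p : ℕ} [Fact p.Prime] {n : ℕ} {G : Type*} [Group G]
    [Finite G] (hG : Nat.card G = p ^ n) {π : (ZMod (p ^ (n + 1)))ˣ →* G}
    (hπ : Function.Surjective π) :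
    Function.Bijective ((ZMod.unitsMap (dvd_pow_self p n.succ_ne_zero)).prod π) := by
  have hp : p.Prime := Fact.out
  refine MonoidHom.prod_bijective_of_coprime (ZMod.unitsMap_surjective _) hπ ?_ ?_
  · simp only [Nat.card_eq_fintype_card, ZMod.card_units_eq_totient, hG,
      Nat.totient_prime_pow_succ hp, Nat.totient_prime hp, mul_comm]
  · rw [Nat.card_eq_fintype_card, ZMod.card_units_eq_totient, Nat.totient_prime hp, hG]
    exact ((Nat.coprime_self_sub_left hp.one_le).mpr (Nat.coprime_one_left p)).pow_right n

theorem ratPt_div_eq_mk {x y : ℚ} (hy : y ≠ 0) :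
    ratPt (x / y) = Projectivization.mk ℚ ![x, y] (fun h => hy (by simpa using congrFun h 1)) := by
  rw [ratPt, Projectivization.mk_eq_mk_iff']
  refine ⟨y⁻¹, ?_⟩
  ext i
  fin_cases i <;> simp [div_eq_inv_mul, hy]

theorem actP1_mk {g : Matrix.SpecialLinearGroup (Fin 2) ℤ} {v w : Fin 2 → ℚ} (hv : v ≠ 0)
    (hw : w ≠ 0) (hgv : ((g : Matrix (Fin 2) (Fin 2) ℤ).map ((↑) : ℤ → ℚ)).mulVec v = w) :
    actP1 g (Projectivization.mk ℚ v hv) = Projectivization.mk ℚ w hw := by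
  have hdet : ((g : Matrix (Fin 2) (Fin 2) ℤ).map ((↑) : ℤ → ℚ)).det ≠ 0 := by
    change ((Int.castRingHom ℚ).mapMatrix (g : Matrix (Fin 2) (Fin 2) ℤ)).det ≠ 0
    rw [← RingHom.map_det, g.2, map_one]
    exact one_ne_zero
  rw [actP1, dif_pos hdet, Projectivization.map_mk]
  subst hgv
  rfl

theorem inOrb_ratPt_add_intCast (N : ℕ) (x : ℚ) (t : ℤ) : inOrb N (ratPt x) (ratPt (x + t)) := by
  refine ⟨ModularGroup.T ^ t, ?_, ?_⟩
  · simp [CongruenceSubgroup.Gamma1_mem, ModularGroup.coe_T_zpow]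
  · rw [ratPt, ratPt]
    exact actP1_mk _ _ (by simp [ModularGroup.coe_T_zpow])

theorem exists_modEq_inOrb_ratPt_div_mul {N : ℕ} (hN : N ≠ 0) {A m : ℤ} (hm : m ≠ 0)
    (hA : IsCoprime A (N * m)) :
    ∃ A' : ℤ, A' ≡ A [ZMOD N] ∧ inOrb N (ratPt (A / (N * m))) (ratPt (A' / N)) := by
  -- Choose `c A + δ m = 1` with `δ ≡ 1 (mod N)`; then `g = (α -β; N c δ) ∈ Γ₁(N)` sends the
  -- column `(A, N m)` to `(α A - β N m, N)`.
  obtain ⟨u, v, huv⟩ := hA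
  set c := u * (1 - m)
  set δ := 1 + v * (1 - m) * N
  have hcδ : c * A + δ * m = 1 := by linear_combination (1 - m) * huv
  obtain ⟨α, β, hαβ⟩ : IsCoprime δ (N * c) :=
    IsCoprime.mul_right ⟨1, -(v * (1 - m)), by ring⟩ ⟨m, A, by linear_combination hcδ⟩
  have hδN : (δ : ZMod N) = 1 := by simp [δ]
  have hαN : (α : ZMod N) = 1 := by
    simpa [hδN] using congrArg (Int.cast : ℤ → ZMod N) hαβ
  let g : Matrix.SpecialLinearGroup (Fin 2) ℤ :=
    ⟨!![α, -β; N * c, δ], by rw [Matrix.det_fin_two_of]; linear_combination hαβ⟩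
  refine ⟨α * A - β * (N * m), ?_, g, ?_, ?_⟩
  · rw [← ZMod.intCast_eq_intCast_iff]
    simp [hαN]
  · exact (CongruenceSubgroup.Gamma1_mem _ _).mpr (by simp [g, hαN, hδN])
  · have hNQ : (N : ℚ) ≠ 0 := Nat.cast_ne_zero.mpr hN
    rw [ratPt_div_eq_mk (mul_ne_zero hNQ (Int.cast_ne_zero.mpr hm)), ratPt_div_eq_mk hNQ]
    refine actP1_mk _ _ ?_
    have hcδQ : (c : ℚ) * A + δ * m = 1 := by exact_mod_cast hcδ
    simp only [g, Matrix.mulVec_fin_two, Matrix.map_apply, Matrix.of_apply, Matrix.cons_val',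
      Matrix.cons_val_zero, Matrix.cons_val_one, Matrix.cons_val_fin_one, Matrix.vecCons_inj,
      and_true]
    push_cast
    exact ⟨by ring, by linear_combination (N : ℚ) * hcδQ⟩

section BoundarySymbol

variable {X : Type*} {N : ℕ} {φ : P1 → X}

theorem comp_eq_of_inOrb
    (hφ : ∀ γ ∈ CongruenceSubgroup.Gamma1 N, ∀ z : P1, φ (actP1 γ.1 z) = φ z)
    {x z : P1} (h : inOrb N x z) : φ z = φ x := by
  obtain ⟨γ, hγ, rfl⟩ := h
  exact hφ γ hγ x

theorem comp_ratPt_div_mul_eq_of_modEq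
    (hφ : ∀ γ ∈ CongruenceSubgroup.Gamma1 N, ∀ z : P1, φ (actP1 γ.1 z) = φ z)
    (hN : N ≠ 0) {A B m : ℤ} (hm : m ≠ 0) (hA : IsCoprime A (N * m)) (hAB : A ≡ B [ZMOD N]) :
    φ (ratPt (A / (N * m))) = φ (ratPt (B / N)) := by
  obtain ⟨A', hA'A, horb⟩ := exists_modEq_inOrb_ratPt_div_mul hN hm hA
  obtain ⟨t, ht⟩ := (hA'A.trans hAB).dvd
  have hB : (B / N : ℚ) = A' / N + t := by
    rw [eq_add_of_sub_eq' ht]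
    field_simp
    push_cast
    ring
  rw [← comp_eq_of_inOrb hφ horb, hB, comp_eq_of_inOrb hφ (inOrb_ratPt_add_intCast N _ t)]

theorem comp_ratPt_val_div_eq
    (hφ : ∀ γ ∈ CongruenceSubgroup.Gamma1 N, ∀ z : P1, φ (actP1 γ.1 z) = φ z)
    {M : ℕ} [NeZero M] (hNM : N ∣ M) (a : (ZMod M)ˣ) :
    φ (ratPt ((a : ZMod M).val / M)) = φ (ratPt ((ZMod.unitsMap hNM a : ZMod N).val / N)) := by
  obtain ⟨m, rfl⟩ := hNM
  have hN : N ≠ 0 := left_ne_zero_of_mul (NeZero.ne (N * m))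
  have hm : (m : ℤ) ≠ 0 := Nat.cast_ne_zero.mpr (right_ne_zero_of_mul (NeZero.ne (N * m)))
  have hA : IsCoprime ((a : ZMod (N * m)).val : ℤ) (N * m) := by
    exact_mod_cast Nat.isCoprime_iff_coprime.mpr (ZMod.val_coe_unit_coprime a)
  have hAB : ((a : ZMod (N * m)).val : ℤ) ≡ (ZMod.unitsMap ⟨m, rfl⟩ a : ZMod N).val [ZMOD N] := by
    have : NeZero N := ⟨hN⟩
    rw [← ZMod.intCast_eq_intCast_iff]
    simp [ZMod.unitsMap]
  simpa using comp_ratPt_div_mul_eq_of_modEq hφ hN hm hA hAB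

end BoundarySymbol

theorem mazur_tate_of_boundary_symbol_eq_general
    (p : ℕ) [Fact p.Prime] (n : ℕ)
    (φ : P1 → ZMod p)
    (hφ : ∀ γ ∈ CongruenceSubgroup.Gamma1 p, ∀ z : P1, φ (actP1 γ.1 z) = φ z)
    (G : Type) [CommGroup G] [Fintype G] (hG : Fintype.card G = p ^ n)
    (π : (ZMod (p ^ (n + 1)))ˣ →* G) (hπ : Function.Surjective π)
    (γ : G) (hγ : orderOf γ = p ^ n) :
    MTel p n π (fun a =>
        φ inftyPt - φ (ratPt (((a : ZMod (p ^ (n + 1))).val : ℚ) / (p : ℚ) ^ (n + 1)))) =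
      (∑ b : (ZMod p)ˣ, (φ inftyPt - φ (ratPt (((b : ZMod p).val : ℚ) / (p : ℚ))))) •
        (MonoidAlgebra.of (ZMod p) G γ - 1) ^ (p ^ n - 1) := by
  have hdvd : p ∣ p ^ (n + 1) := dvd_pow_self p n.succ_ne_zero
  set c : (ZMod p)ˣ → ZMod p := fun b => φ inftyPt - φ (ratPt (((b : ZMod p).val : ℚ) / (p : ℚ)))
  have hc (a : (ZMod (p ^ (n + 1)))ˣ) :
      φ inftyPt - φ (ratPt (((a : ZMod (p ^ (n + 1))).val : ℚ) / (p : ℚ) ^ (n + 1))) =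
        c (ZMod.unitsMap hdvd a) := by
    simpa [c] using comp_ratPt_val_div_eq hφ hdvd a
  simp only [MTel, hc]
  rw [Fintype.sum_smul_comp_of_bijective
      (ZMod.unitsMap_prod_bijective (Nat.card_eq_fintype_card.trans hG) hπ),
    MonoidAlgebra.sum_of_eq_sub_one_pow p hG hγ]

/-- The key computation in Theorem 4.6: let `p` be an odd prime, `n ≥ 1`, and let `φ` be a
weight-0 boundary modular symbol of level `Γ₁(p)` with values in `ℤ/pℤ` (a `Γ₁(p)`-invariant
function on `P¹(ℚ)`).  Set `C = ∑_{a ∈ (ℤ/pℤ)ˣ} (φ({∞})(1) - φ({a/p})(1))`.  Then, in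
`(ℤ/pℤ)[𝒢ₙ]` (where `𝒢ₙ` is the cyclic quotient of order `pⁿ` of `(ℤ/p^{n+1}ℤ)ˣ` under `πₙ`),
the level-`n` Mazur–Tate element satisfies `θ_{n,φ} = C · T^{pⁿ - 1}` where `T = γₙ - 1` for a
generator `γₙ` of `𝒢ₙ`. -/
theorem mazur_tate_of_boundary_symbol_eq
    (p : ℕ) [Fact p.Prime] (hodd : Odd p) (n : ℕ) (hn : 1 ≤ n)
    (φ : P1 → ZMod p)
    (hφ : ∀ γ ∈ CongruenceSubgroup.Gamma1 p, ∀ z : P1, φ (actP1 γ.1 z) = φ z)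
    (G : Type) [CommGroup G] [Fintype G] (hG : Fintype.card G = p ^ n)
    (π : (ZMod (p ^ (n + 1)))ˣ →* G) (hπ : Function.Surjective π)
    (γ : G) (hγ : orderOf γ = p ^ n) :
    MTel p n π (fun a =>
        φ inftyPt - φ (ratPt (((a : ZMod (p ^ (n + 1))).val : ℚ) / (p : ℚ) ^ (n + 1)))) =
      (∑ b : (ZMod p)ˣ, (φ inftyPt - φ (ratPt (((b : ZMod p).val : ℚ) / (p : ℚ))))) •
        (MonoidAlgebra.of (ZMod p) G γ - 1) ^ (p ^ n - 1) :=
  mazur_tate_of_boundary_symbol_eq_general p n φ hφ G hG π hπ γ hγ
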